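/- arXiv:2201.10667 — 2 statements merged into one kernel-verified Lean document; each statement's English description precedes it below -/
import Mathlib

section
/- The information gain expression I = ((3+2√2)·log₂(3+2√2) + (3−2√2)·log₂(3−2√2))/12 − 2/3 is positive and less than 2/3; moreover I < log₂(3)/2. -/
/-!
Since `3 - 2√2 = (3 + 2√2)⁻¹`, the two entropy terms combine to `(a - a⁻¹) log₂ a` with
`a = 3 + 2√2`, so `I = √2 L / 3 - 2 / 3` where `L = log₂ (3 + 2√2)`. All three claims then
follow from `√2 < L < 2√2` and `4 / 3 < log₂ 3`, each of which reduces to comparing integer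
powers: `2² < 3 + 2√2`, `6⁵ < 2¹⁴` and `2⁴ < 3³`.
-/

open Real

lemma div_lt_logb_of_pow_lt {b a : ℝ} {m n : ℕ} (hb : 1 < b) (hn : 0 < n) (h : b ^ m < a ^ n) :
    (m : ℝ) / n < logb b a := by
  rw [div_lt_iff₀ (by positivity), mul_comm, ← logb_pow]
  calc (m : ℝ) = logb b (b ^ m) := by rw [logb_pow, logb_self_eq_one hb, mul_one]
    _ < logb b (a ^ n) := logb_lt_logb hb (by positivity) h

lemma logb_lt_div_of_pow_lt {b a : ℝ} {m n : ℕ} (hb : 1 < b) (ha : 0 < a) (hn : 0 < n)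
    (h : a ^ n < b ^ m) : logb b a < m / n := by
  rw [lt_div_iff₀ (by positivity), mul_comm, ← logb_pow]
  calc logb b (a ^ n) < logb b (b ^ m) := logb_lt_logb hb (by positivity) h
    _ = m := by rw [logb_pow, logb_self_eq_one hb, mul_one]

lemma mul_logb_add_inv_mul_logb_inv (b a : ℝ) :
    a * logb b a + a⁻¹ * logb b a⁻¹ = (a - a⁻¹) * logb b a := by
  rw [logb_inv]
  ring

lemma three_sub_two_sqrt_two_eq_inv : 3 - 2 * √2 = (3 + 2 * √2)⁻¹ := by
  refine eq_inv_of_mul_eq_one_left ?_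
  nlinarith [sq_sqrt (show (0 : ℝ) ≤ 2 by norm_num)]

lemma sqrt_two_lt_logb_two_three_add_two_sqrt_two : √2 < logb 2 (3 + 2 * √2) := by
  have h := div_lt_logb_of_pow_lt (b := 2) (a := 3 + 2 * √2) (m := 2) (n := 1) one_lt_two one_pos
    (by linarith [one_lt_sqrt_two])
  norm_num at h
  linarith [sqrt_two_lt_three_halves]

lemma logb_two_three_add_two_sqrt_two_lt : logb 2 (3 + 2 * √2) < 2 * √2 := by
  have h6 : logb 2 (3 + 2 * √2) < logb 2 6 :=
    logb_lt_logb one_lt_two (by positivity) (by linarith [sqrt_two_lt_three_halves])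
  have h14 := logb_lt_div_of_pow_lt (b := 2) (a := 6) (m := 14) (n := 5) one_lt_two
    (by norm_num) (by norm_num) (by norm_num)
  have hsqrt : 7 / 5 < √2 := by
    rw [lt_sqrt (by norm_num)]
    norm_num
  norm_num at h14
  linarith

lemma four_thirds_lt_logb_two_three : 4 / 3 < logb 2 3 := by
  simpa using div_lt_logb_of_pow_lt (b := 2) (a := 3) (m := 4) (n := 3) one_lt_two
    (by norm_num) (by norm_num)

lemma informationGain_eq :
    ((3 + 2 * √2) * logb 2 (3 + 2 * √2) + (3 - 2 * √2) * logb 2 (3 - 2 * √2)) / 12 - 2 / 3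
      = √2 * logb 2 (3 + 2 * √2) / 3 - 2 / 3 := by
  rw [three_sub_two_sqrt_two_eq_inv, mul_logb_add_inv_mul_logb_inv, ← three_sub_two_sqrt_two_eq_inv]
  ring

/-- The one-way LOCC information gain
`I = ((3+2√2)·log₂(3+2√2) + (3-2√2)·log₂(3-2√2))/12 - 2/3`
satisfies `0 < I`, `I < 2/3`, and `I < log₂ 3 / 2`. -/
theorem stmt_10 :
    let I : ℝ := ((3 + 2 * Real.sqrt 2) * Real.logb 2 (3 + 2 * Real.sqrt 2)
      + (3 - 2 * Real.sqrt 2) * Real.logb 2 (3 - 2 * Real.sqrt 2)) / 12 - 2 / 3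
    0 < I ∧ I < 2 / 3 ∧ I < Real.logb 2 3 / 2 := by
  intro I
  have hI : I = √2 * logb 2 (3 + 2 * √2) / 3 - 2 / 3 := informationGain_eq
  have hsq : √2 * √2 = 2 := mul_self_sqrt zero_le_two
  have hlow := mul_lt_mul_of_pos_left sqrt_two_lt_logb_two_three_add_two_sqrt_two
    (sqrt_pos.mpr zero_lt_two)
  have hhigh := mul_lt_mul_of_pos_left logb_two_three_add_two_sqrt_two_lt
    (sqrt_pos.mpr zero_lt_two)
  have h3 := four_thirds_lt_logb_two_three
  refine ⟨?_, ?_, ?_⟩ <;> linarith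
end

section
/- The one-way LOCC information gain log₂ 3 + (√3/2)·log₂(2+√3) − 2 is strictly greater than the unentangled simultaneous information gain log₂ 3 − 1/2, i.e., log₂ 3 − 1/2 < log₂ 3 + (√3/2)·log₂(2+√3) − 2. -/
/-- The one-way LOCC information gain for the Peres-Wootters ensemble strictly exceeds
the simultaneous unentangled information gain:
`log₂ 3 - 1/2 < log₂ 3 + (√3/2)·log₂(2+√3) - 2`. -/
theorem stmt_17 :
    Real.logb 2 3 - 1 / 2
      < Real.logb 2 3 + (Real.sqrt 3 / 2) * Real.logb 2 (2 + Real.sqrt 3) - 2 := by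
  have h2 : (0:ℝ) < Real.log 2 := Real.log_pos (by norm_num)
  have hs : Real.sqrt 3 > 17/10 := by
    nlinarith [Real.sq_sqrt (by norm_num : (3:ℝ) ≥ 0), Real.sqrt_nonneg 3]
  have hlog37 : Real.log (37/10) > (30/17) * Real.log 2 := by
    have hp : ((2:ℝ))^(30:ℕ) < ((37/10:ℝ))^(17:ℕ) := by norm_num
    have := Real.log_lt_log (by positivity) hp
    rw [Real.log_pow, Real.log_pow] at this
    push_cast at this
    linarith
  have hmono : Real.log (37/10) ≤ Real.log (2 + Real.sqrt 3) := by
    apply Real.log_le_log (by norm_num)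
    linarith
  have key : Real.sqrt 3 * Real.log (2 + Real.sqrt 3) > 3 * Real.log 2 := by
    nlinarith [hs, hlog37, hmono, h2]
  have hlogb : Real.logb 2 (2 + Real.sqrt 3) = Real.log (2 + Real.sqrt 3) / Real.log 2 := rfl
  rw [hlogb]
  rw [div_mul_eq_mul_div, gt_iff_lt, ← sub_pos] at *
  have : Real.sqrt 3 / 2 * (Real.log (2 + Real.sqrt 3) / Real.log 2) > 3/2 := by
    rw [div_mul_div_comm, gt_iff_lt, lt_div_iff₀ (by positivity)]
    linarith [key]
  linarith
end
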